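/- In the braid group B_5, let γ = [1,2,1,3,3,2,2,3,4,3,2,1,3,2,1,3,2,4,2,4,1,4,2,1,3,2,3,4,3,4,3,2] (the braid word for o9_40487) and α' = [-3,1,2,3]. Then α'⁻¹·γ·α' = [(1,2,3,4)^5, 2,1,3,2,4,3,3,4,4,3,2,1]. -/

import Mathlib

/-- The Artin braid relations on `n` generators (so this presents the braid
group on `n + 1` strands); generator `i : Fin n` corresponds to `σ_{i+1}`. -/
def braidRels (n : ℕ) : Set (FreeGroup (Fin n)) :=
  { r | (∃ i j : Fin n, (i : ℕ) + 1 = j ∧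
          r = FreeGroup.of i * FreeGroup.of j * FreeGroup.of i *
              (FreeGroup.of j * FreeGroup.of i * FreeGroup.of j)⁻¹) ∨
        (∃ i j : Fin n, (i : ℕ) + 2 ≤ (j : ℕ) ∧
          r = FreeGroup.of i * FreeGroup.of j * (FreeGroup.of j * FreeGroup.of i)⁻¹) }

/-- The braid group on `n + 1` strands, with `n` Artin generators. -/
def BraidGroup (n : ℕ) : Type := PresentedGroup (braidRels n)

instance (n : ℕ) : Group (BraidGroup n) :=
  inferInstanceAs (Group (PresentedGroup (braidRels n)))

/-- The Artin generator `σ_{i+1}` of the braid group on `n + 1` strands. -/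
def braidGen {n : ℕ} (i : Fin n) : BraidGroup n := PresentedGroup.of i

/-- The letter of a braid word: a nonzero integer `a` denotes
`σ_{|a|}^{sign a}`. (Out-of-range letters give `1`.) -/
noncomputable def braidLetter (n : ℕ) (a : ℤ) : BraidGroup n :=
  if h : a.natAbs - 1 < n then
    (braidGen (⟨a.natAbs - 1, h⟩ : Fin n)) ^ (if 0 < a then (1 : ℤ) else -1)
  else 1

/-- The element of the braid group represented by a braid word. -/
noncomputable def braidWord (n : ℕ) (w : List ℤ) : BraidGroup n :=
  (w.map (braidLetter n)).prod

/-!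
Write `P = σ₁σ₂σ₃`, so that `α' = σ₃⁻¹ P`. Since `P σ₂ = σ₃ P`, the identity
`α'⁻¹ γ α' = R` is equivalent to the identity `σ₃ γ P = P R σ₂` between positive words.
Positive words are compared by Garside's left-division algorithm: to split a generator `σ_a`
off the front of a positive word `σ_b w`, use that `σ_a` and `σ_b` have least common multiple
`σ_a σ_b` if `|a - b| ≥ 2` and `σ_a σ_b σ_a = σ_b σ_a σ_b` if `|a - b| = 1`, and recurse.
Only the soundness of the algorithm is needed; running it is a kernel computation.
-/

theorem conj_inv_mul_eq_of_mul_eq {G : Type*} [Group G] {s t p g r : G} (hp : p * t = s * p)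
    (h : s * g * p = p * r * t) : (s⁻¹ * p)⁻¹ * g * (s⁻¹ * p) = r := by
  have hsp : s⁻¹ * p = p * t⁻¹ := by
    rw [inv_mul_eq_iff_eq_mul, ← mul_assoc, ← hp, mul_inv_cancel_right]
  calc (s⁻¹ * p)⁻¹ * g * (s⁻¹ * p) = p⁻¹ * s * g * (s⁻¹ * p) := by group
    _ = p⁻¹ * (s * g * p) * t⁻¹ := by rw [hsp]; group
    _ = r := by rw [h]; group

section Relations

variable {n : ℕ}

theorem braidGen_braid {i j : Fin n} (h : (i : ℕ) + 1 = j) :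
    braidGen i * braidGen j * braidGen i = braidGen j * braidGen i * braidGen j :=
  PresentedGroup.mk_eq_mk_of_mul_inv_mem (Or.inl ⟨i, j, h, rfl⟩)

theorem braidGen_commute {i j : Fin n} (h : (i : ℕ) + 2 ≤ j) :
    Commute (braidGen i) (braidGen j) :=
  PresentedGroup.mk_eq_mk_of_mul_inv_mem (Or.inr ⟨i, j, h, rfl⟩)

theorem braidLetter_of_pos {a : ℤ} (ha : 0 < a) (han : a ≤ n) :
    braidLetter n a = braidGen ⟨a.natAbs - 1, by omega⟩ := by
  rw [braidLetter, dif_pos (by omega), if_pos ha, zpow_one]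

theorem braidLetter_neg {a : ℤ} (ha : 0 < a) (han : a ≤ n) :
    braidLetter n (-a) = (braidLetter n a)⁻¹ := by
  rw [braidLetter_of_pos ha han, braidLetter, dif_pos (by omega), if_neg (by omega),
    zpow_neg_one]
  simp

theorem braidLetter_braid {a b : ℤ} (ha : 0 < a) (han : a ≤ n) (hb : 0 < b) (hbn : b ≤ n)
    (hab : a + 1 = b ∨ b + 1 = a) :
    braidLetter n a * braidLetter n b * braidLetter n a =
      braidLetter n b * braidLetter n a * braidLetter n b := by
  rw [braidLetter_of_pos ha han, braidLetter_of_pos hb hbn]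
  rcases hab with h | h
  · exact braidGen_braid (by simp; omega)
  · exact (braidGen_braid (by simp; omega)).symm

theorem braidLetter_commute {a b : ℤ} (ha : 0 < a) (han : a ≤ n) (hb : 0 < b) (hbn : b ≤ n)
    (hab : a + 2 ≤ b ∨ b + 2 ≤ a) :
    Commute (braidLetter n a) (braidLetter n b) := by
  rw [braidLetter_of_pos ha han, braidLetter_of_pos hb hbn]
  rcases hab with h | h
  · exact braidGen_commute (by simp; omega)
  · exact (braidGen_commute (by simp; omega)).symm

@[simp]
theorem braidWord_nil : braidWord n [] = 1 := rfl

@[simp]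
theorem braidWord_cons (a : ℤ) (w : List ℤ) :
    braidWord n (a :: w) = braidLetter n a * braidWord n w := by
  simp [braidWord]

theorem braidWord_append (v w : List ℤ) :
    braidWord n (v ++ w) = braidWord n v * braidWord n w := by
  simp [braidWord]

end Relations

def IsPositiveWord (n : ℕ) (w : List ℤ) : Prop := ∀ a ∈ w, 0 < a ∧ a ≤ n

instance (n : ℕ) (w : List ℤ) : Decidable (IsPositiveWord n w) :=
  inferInstanceAs (Decidable (∀ a ∈ w, 0 < a ∧ a ≤ n))

theorem IsPositiveWord.mono {n : ℕ} {v w : List ℤ} (hw : IsPositiveWord n w) (hvw : v ⊆ w) :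
    IsPositiveWord n v :=
  fun a ha => hw a (hvw ha)

-- `k` is fuel: the length of the word always suffices.
def leftQuotient? : ℕ → ℤ → List ℤ → Option (List ℤ)
  | 0, _, _ => none
  | _ + 1, _, [] => none
  | k + 1, a, b :: w =>
    if a = b then some w
    else if a + 2 ≤ b ∨ b + 2 ≤ a then (leftQuotient? k a w).map (b :: ·)
    else (leftQuotient? k a w).bind fun w' => (leftQuotient? k b w').map (b :: a :: ·)

theorem leftQuotient?_subset {k : ℕ} {a : ℤ} {w w' : List ℤ}
    (h : leftQuotient? k a w = some w') : w' ⊆ a :: w := by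
  induction k generalizing a w w' with
  | zero => simp [leftQuotient?] at h
  | succ k ih =>
    rcases w with _ | ⟨b, w⟩
    · simp [leftQuotient?] at h
    simp only [leftQuotient?] at h
    split_ifs at h
    · cases h
      grind
    · obtain ⟨t, ht, rfl⟩ := Option.map_eq_some_iff.mp h
      have := ih ht
      grind
    · obtain ⟨t, ht, h⟩ := Option.bind_eq_some_iff.mp h
      obtain ⟨u, hu, rfl⟩ := Option.map_eq_some_iff.mp h
      have := ih ht
      have := ih hu
      grind

theorem braidWord_eq_braidLetter_mul_of_leftQuotient? {n k : ℕ} {a : ℤ} {w w' : List ℤ}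
    (hw : IsPositiveWord n (a :: w)) (h : leftQuotient? k a w = some w') :
    braidWord n w = braidLetter n a * braidWord n w' := by
  induction k generalizing a w w' with
  | zero => simp [leftQuotient?] at h
  | succ k ih =>
    rcases w with _ | ⟨b, w⟩
    · simp [leftQuotient?] at h
    obtain ⟨ha, hb, hw⟩ : (0 < a ∧ a ≤ n) ∧ (0 < b ∧ b ≤ n) ∧ IsPositiveWord n w := by
      simpa [IsPositiveWord] using hw
    simp only [leftQuotient?] at h
    split_ifs at h with hab hfar
    · subst hab; cases h; rfl
    · obtain ⟨t, ht, rfl⟩ := Option.map_eq_some_iff.mp h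
      have hat : IsPositiveWord n (a :: w) := List.forall_mem_cons.mpr ⟨ha, hw⟩
      rw [braidWord_cons, braidWord_cons, ih hat ht, ← mul_assoc, ← mul_assoc,
        (braidLetter_commute hb.1 hb.2 ha.1 ha.2 hfar.symm).eq]
    · obtain ⟨t, ht, h⟩ := Option.bind_eq_some_iff.mp h
      obtain ⟨u, hu, rfl⟩ := Option.map_eq_some_iff.mp h
      have hat : IsPositiveWord n (a :: w) := List.forall_mem_cons.mpr ⟨ha, hw⟩
      have hbt : IsPositiveWord n (b :: t) :=
        List.forall_mem_cons.mpr ⟨hb, hat.mono (leftQuotient?_subset ht)⟩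
      simp only [braidWord_cons, ih hat ht, ih hbt hu, ← mul_assoc]
      rw [braidLetter_braid hb.1 hb.2 ha.1 ha.2 (by omega)]

def positiveWordsEq : List ℤ → List ℤ → Bool
  | [], w => w.isEmpty
  | a :: v, w =>
    match leftQuotient? w.length a w with
    | some w' => positiveWordsEq v w'
    | none => false

theorem braidWord_eq_of_positiveWordsEq {n : ℕ} {v w : List ℤ} (hv : IsPositiveWord n v)
    (hw : IsPositiveWord n w) (h : positiveWordsEq v w = true) : braidWord n v = braidWord n w := by
  induction v generalizing w with
  | nil => simp_all [positiveWordsEq]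
  | cons a v ih =>
    obtain ⟨ha, hv⟩ := List.forall_mem_cons.mp hv
    simp only [positiveWordsEq] at h
    split at h
    · rename_i w' hw'
      have haw : IsPositiveWord n (a :: w) := List.forall_mem_cons.mpr ⟨ha, hw⟩
      rw [braidWord_cons, braidWord_eq_braidLetter_mul_of_leftQuotient? haw hw',
        ih hv (haw.mono (leftQuotient?_subset hw')) h]
    · simp at h

theorem stmt11
    (γ α : BraidGroup 4)
    (hγ : γ = braidWord 4
      [1, 2, 1, 3, 3, 2, 2, 3, 4, 3, 2, 1, 3, 2, 1, 3, 2, 4, 2, 4, 1, 4, 2, 1, 3, 2, 3, 4, 3,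
      4, 3, 2])
    (hα : α = braidWord 4
      [-3, 1, 2, 3]) :
    α⁻¹ * γ * α = braidWord 4
      [1, 2, 3, 4, 1, 2, 3, 4, 1, 2, 3, 4, 1, 2, 3, 4, 1, 2, 3, 4, 2, 1, 3, 2, 4, 3, 3, 4, 4,
      3, 2, 1] := by
  have hα' : α = (braidWord 4 [3])⁻¹ * braidWord 4 [1, 2, 3] := by
    rw [hα, braidWord_cons, braidLetter_neg (by norm_num) (by norm_num)]
    simp
  subst hγ
  rw [hα']
  apply conj_inv_mul_eq_of_mul_eq (t := braidWord 4 [2])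
  all_goals
    simp only [← braidWord_append, List.cons_append, List.nil_append]
    exact braidWord_eq_of_positiveWordsEq (by decide) (by decide) (by decide)
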